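/- Let w be a locally integrable weight and Q₀ a dyadic cube with 0 < w(Q₀) < ∞, and let 𝓢(Q₀) be the stopping cubes built with threshold 4 as above. Then the pointwise bound Σ_{S ∈ 𝓢(Q₀)} (w(S)/|S|) 1_S(x) ≤ C_d M(w 1_{Q₀})(x) holds for a.e. x ∈ Q₀, where M is the Hardy–Littlewood maximal operator and C_d a dimensional constant. -/

import Mathlib

open MeasureTheory Set
open scoped ENNReal

/-- A dyadic cube in `ℝ^d`, given by a scale `k` and lower-corner integer coordinates `m`. -/
structure DyadicCube (d : ℕ) where
  k : ℤ
  m : Fin d → ℤ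

/-- The subset of `ℝ^d` corresponding to a dyadic cube. -/
def DyadicCube.toSet {d : ℕ} (Q : DyadicCube d) : Set (Fin d → ℝ) :=
  Set.univ.pi fun i => Set.Ico ((Q.m i : ℝ) * 2 ^ Q.k) (((Q.m i : ℝ) + 1) * 2 ^ Q.k)

/-- An axis-parallel cube in `ℝ^d` with lower corner `a` and side length `s > 0`. -/
structure Cube (d : ℕ) where
  a : Fin d → ℝ
  s : ℝ
  s_pos : 0 < s

/-- The subset of `ℝ^d` corresponding to a cube. -/
def Cube.toSet {d : ℕ} (Q : Cube d) : Set (Fin d → ℝ) :=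
  Set.univ.pi fun i => Set.Ico (Q.a i) (Q.a i + Q.s)

/-- `u(E) = ∫_E u dx` for a weight `u`, as an extended nonnegative real. -/
noncomputable def wMeas {d : ℕ} (u : (Fin d → ℝ) → ℝ) (E : Set (Fin d → ℝ)) : ℝ≥0∞ :=
  ∫⁻ x in E, ENNReal.ofReal (u x)

/-- The (centered) Hardy–Littlewood maximal function. -/
noncomputable def maxFn {d : ℕ} (f : (Fin d → ℝ) → ℝ) (x : Fin d → ℝ) : ℝ≥0∞ :=
  ⨆ (t : ℝ) (_ : 0 < t),
    (ENNReal.ofReal ((2 * t) ^ d))⁻¹ *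
      ∫⁻ y in Set.univ.pi fun _ : Fin d => Set.Icc (-t) t, ENNReal.ofReal |f (x + y)|

/-- The Fujii–Wilson `A_∞` characteristic `‖w‖_{A_∞} = sup_Q w(Q)⁻¹ ∫_Q M(w 1_Q)`. -/
noncomputable def AinfChar {d : ℕ} (w : (Fin d → ℝ) → ℝ) : ℝ≥0∞ :=
  ⨆ Q : Cube d, (wMeas w Q.toSet)⁻¹ * ∫⁻ x in Q.toSet, maxFn (Q.toSet.indicator w) x

/-- The average of `w` over `Q'` exceeds 4 times the average over `Q`. -/
noncomputable def BigAvg {d : ℕ} (w : (Fin d → ℝ) → ℝ) (Q' Q : DyadicCube d) : Prop :=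
  4 * (wMeas w Q.toSet / volume Q.toSet) < wMeas w Q'.toSet / volume Q'.toSet

/-- `𝓣(S)`: the maximal dyadic subcubes `S' ⊆ S` with `w(S')/|S'| > 4 w(S)/|S|`. -/
def stoppingChildren {d : ℕ} (w : (Fin d → ℝ) → ℝ) (S : DyadicCube d) :
    Set (DyadicCube d) :=
  {S' : DyadicCube d | S'.toSet ⊆ S.toSet ∧ BigAvg w S' S ∧
    ∀ S'' : DyadicCube d, S'.toSet ⊆ S''.toSet → S''.toSet ⊆ S.toSet →
      BigAvg w S'' S → S''.toSet = S'.toSet}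

/-- The `j`-th generation of stopping cubes below `Q₀`. -/
def stoppingGen {d : ℕ} (w : (Fin d → ℝ) → ℝ) (Q₀ : DyadicCube d) :
    ℕ → Set (DyadicCube d)
  | 0 => {Q₀}
  | j + 1 => ⋃ S ∈ stoppingGen w Q₀ j, stoppingChildren w S

/-- The collection `𝓢(Q₀)` of stopping cubes of `Q₀`. -/
def stoppingCubes {d : ℕ} (w : (Fin d → ℝ) → ℝ) (Q₀ : DyadicCube d) :
    Set (DyadicCube d) :=
  ⋃ j : ℕ, stoppingGen w Q₀ j

/-! At a point `x`, the stopping cubes containing `x` form a chain with at most one cube in each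
generation, and along it the averages `w(S)/|S|` grow by a factor at least `4` per generation.
Hence every finite partial sum is at most twice the average over the last cube of the chain.
That cube lies in the box centred at `x` whose half-width is the cube's side length, so its average is at most
`2^d M(w 1_{Q₀})(x)`. -/

lemma ENNReal.sum_le_two_mul_of_two_pow_mul_le {ι : Type*} {s : Finset ι} {n : ι → ℕ}
    (hn : InjOn n s) {N : ℕ} (hN : ∀ i ∈ s, n i ≤ N) {a : ι → ℝ≥0∞} {A : ℝ≥0∞}
    (ha : ∀ i ∈ s, 2 ^ (N - n i) * a i ≤ A) : ∑ i ∈ s, a i ≤ 2 * A := by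
  have hinj : InjOn (N - n ·) s := fun i hi j hj h =>
    hn hi hj (by have := hN i hi; have := hN j hj; simp only at h; omega)
  calc ∑ i ∈ s, a i ≤ ∑ i ∈ s, 2⁻¹ ^ (N - n i) * A := by
        refine Finset.sum_le_sum fun i hi => ?_
        rw [← ENNReal.inv_pow, ← ENNReal.div_eq_inv_mul, ENNReal.le_div_iff_mul_le
          (.inl (pow_ne_zero _ two_ne_zero)) (.inl (ENNReal.pow_ne_top ENNReal.ofNat_ne_top)),
          mul_comm]
        exact ha i hi
    _ = (∑ k ∈ s.image (N - n ·), 2⁻¹ ^ k) * A := by rw [Finset.sum_image hinj, Finset.sum_mul]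
    _ ≤ (∑' k : ℕ, 2⁻¹ ^ k) * A := by gcongr; exact ENNReal.sum_le_tsum _
    _ = 2 * A := by rw [ENNReal.tsum_geometric, ENNReal.one_sub_inv_two, inv_inv]

namespace DyadicCube

variable {d : ℕ}

lemma mem_toSet_iff_floor {Q : DyadicCube d} {z : Fin d → ℝ} :
    z ∈ Q.toSet ↔ ∀ i, ⌊z i / 2 ^ Q.k⌋ = Q.m i := by
  have h2k : (0 : ℝ) < 2 ^ Q.k := by positivity
  simp only [toSet, mem_pi, mem_univ, true_implies, mem_Ico, Int.floor_eq_iff, le_div_iff₀ h2k,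
    div_lt_iff₀ h2k]

lemma floor_div_two_zpow_of_le {k k' : ℤ} (h : k ≤ k') (r : ℝ) :
    ⌊r / 2 ^ k'⌋ = ⌊r / 2 ^ k⌋ / 2 ^ (k' - k).toNat := by
  have hk' : (2 : ℝ) ^ k' = 2 ^ k * ((2 ^ (k' - k).toNat : ℕ) : ℝ) := by
    rw [Nat.cast_pow, Nat.cast_ofNat, ← zpow_natCast, ← zpow_add₀ two_ne_zero]
    congr 1; omega
  rw [hk', ← div_div, Int.floor_div_natCast]
  norm_cast

lemma toSet_subset_of_k_le {S S' : DyadicCube d} (hk : S.k ≤ S'.k) {x : Fin d → ℝ}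
    (hx : x ∈ S.toSet) (hx' : x ∈ S'.toSet) : S.toSet ⊆ S'.toSet := by
  intro z hz
  rw [mem_toSet_iff_floor] at hx hx' hz ⊢
  intro i
  rw [← hx' i, floor_div_two_zpow_of_le hk, floor_div_two_zpow_of_le hk, hz i, hx i]

lemma toSet_subset_or_subset {S S' : DyadicCube d} {x : Fin d → ℝ}
    (hx : x ∈ S.toSet) (hx' : x ∈ S'.toSet) : S.toSet ⊆ S'.toSet ∨ S'.toSet ⊆ S.toSet :=
  (le_total S.k S'.k).imp (toSet_subset_of_k_le · hx hx') (toSet_subset_of_k_le · hx' hx)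

lemma corner_mem_toSet (Q : DyadicCube d) : (fun i => (Q.m i : ℝ) * 2 ^ Q.k) ∈ Q.toSet := by
  simp [mem_toSet_iff_floor, mul_div_cancel_right₀ _ (zpow_ne_zero Q.k (two_ne_zero' ℝ))]

lemma volume_toSet (Q : DyadicCube d) :
    volume Q.toSet = ENNReal.ofReal (2 ^ Q.k) ^ d := by
  simp [toSet, volume_pi_pi, Real.volume_Ico, add_one_mul]

lemma toSet_injective (hd : d ≠ 0) : Function.Injective (toSet : DyadicCube d → _) := by
  intro S S' h
  have hk : S.k = S'.k := by
    have hvol := congrArg volume h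
    rw [volume_toSet, volume_toSet, (ENNReal.pow_right_strictMono hd).injective.eq_iff,
      ENNReal.ofReal_eq_ofReal_iff (by positivity) (by positivity)] at hvol
    exact zpow_right_injective₀ two_pos (by norm_num) hvol
  have hm : S.m = S'.m := by
    ext i
    have hc := mem_toSet_iff_floor.mp (h ▸ S.corner_mem_toSet) i
    simpa [← hk, mul_div_cancel_right₀ _ (zpow_ne_zero S.k (two_ne_zero' ℝ))] using hc
  cases S; cases S'
  simp_all

lemma measurableSet_toSet (Q : DyadicCube d) : MeasurableSet Q.toSet :=
  MeasurableSet.univ_pi fun _ => measurableSet_Ico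

lemma preimage_add_toSet_subset {Q : DyadicCube d} {x : Fin d → ℝ} (hx : x ∈ Q.toSet) :
    (x + ·) ⁻¹' Q.toSet ⊆ univ.pi fun _ => Icc (-2 ^ Q.k) (2 ^ Q.k) := by
  simp only [toSet, mem_pi, mem_univ, true_implies, mem_Ico] at hx
  intro y hy
  simp only [toSet, mem_preimage, mem_pi, mem_univ, true_implies, mem_Ico, Pi.add_apply] at hy
  intro i _
  constructor <;> linarith [hx i, hy i]

noncomputable def wAvg (w : (Fin d → ℝ) → ℝ) (Q : DyadicCube d) : ℝ≥0∞ :=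
  wMeas w Q.toSet / volume Q.toSet

lemma wAvg_le_maxFn (w : (Fin d → ℝ) → ℝ) {Q : DyadicCube d} {E : Set (Fin d → ℝ)}
    (hQE : Q.toSet ⊆ E) {x : Fin d → ℝ} (hx : x ∈ Q.toSet) :
    Q.wAvg w ≤ 2 ^ d * maxFn (E.indicator w) x := by
  set f := E.indicator w
  set t : ℝ := 2 ^ Q.k
  have ht : 0 < t := by positivity
  have hint : wMeas w Q.toSet ≤ ∫⁻ y in univ.pi fun _ => Icc (-t) t, ENNReal.ofReal |f (x + y)| :=
    calc wMeas w Q.toSet ≤ ∫⁻ z in Q.toSet, ENNReal.ofReal |f z| := by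
          refine setLIntegral_mono' Q.measurableSet_toSet fun z hz => ?_
          simp only [f, indicator_of_mem (hQE hz)]
          exact ENNReal.ofReal_le_ofReal (le_abs_self _)
      _ = ∫⁻ y in (x + ·) ⁻¹' Q.toSet, ENNReal.ofReal |f (x + y)| :=
          ((measurePreserving_add_left volume x).setLIntegral_comp_preimage_emb
            (measurableEmbedding_addLeft x) _ _).symm
      _ ≤ _ := lintegral_mono_set (preimage_add_toSet_subset hx)
  have hmax : (ENNReal.ofReal ((2 * t) ^ d))⁻¹ *
      ∫⁻ y in univ.pi fun _ => Icc (-t) t, ENNReal.ofReal |f (x + y)| ≤ maxFn f x :=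
    le_iSup₂ (f := fun t (_ : 0 < t) => (ENNReal.ofReal ((2 * t) ^ d))⁻¹ *
      ∫⁻ y in univ.pi fun _ : Fin d => Icc (-t) t, ENNReal.ofReal |f (x + y)|) t ht
  have hvol : ENNReal.ofReal ((2 * t) ^ d) = 2 ^ d * volume Q.toSet := by
    rw [volume_toSet, ENNReal.ofReal_pow (by positivity), ENNReal.ofReal_mul zero_le_two,
      mul_pow, ENNReal.ofReal_ofNat]
  have h2d : (2 : ℝ≥0∞) ^ d ≠ 0 := pow_ne_zero _ two_ne_zero
  have h2d' : (2 : ℝ≥0∞) ^ d ≠ ∞ := ENNReal.pow_ne_top ENNReal.ofNat_ne_top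
  calc Q.wAvg w = 2 ^ d * ((ENNReal.ofReal ((2 * t) ^ d))⁻¹ * wMeas w Q.toSet) := by
        rw [hvol, ENNReal.mul_inv (.inl h2d) (.inl h2d'), ← mul_assoc, ← mul_assoc,
          ENNReal.mul_inv_cancel h2d h2d', one_mul, wAvg, ENNReal.div_eq_inv_mul]
    _ ≤ 2 ^ d * ((ENNReal.ofReal ((2 * t) ^ d))⁻¹ *
          ∫⁻ y in univ.pi fun _ => Icc (-t) t, ENNReal.ofReal |f (x + y)|) := by gcongr
    _ ≤ 2 ^ d * maxFn f x := by gcongr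

end DyadicCube

section Stopping

open DyadicCube

variable {d : ℕ} {w : (Fin d → ℝ) → ℝ} {Q₀ P S S' : DyadicCube d} {x : Fin d → ℝ}

lemma mem_stoppingGen_succ {j : ℕ} :
    S ∈ stoppingGen w Q₀ (j + 1) ↔ ∃ P ∈ stoppingGen w Q₀ j, S ∈ stoppingChildren w P := by
  simp [stoppingGen]

lemma four_mul_wAvg_lt_of_mem_stoppingChildren (hS : S ∈ stoppingChildren w P) :
    4 * P.wAvg w < S.wAvg w :=
  hS.2.1

lemma eq_of_mem_stoppingChildren_of_mem_toSet (hS : S ∈ stoppingChildren w P)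
    (hS' : S' ∈ stoppingChildren w P) (hx : x ∈ S.toSet) (hx' : x ∈ S'.toSet) : S = S' := by
  have hset : S.toSet = S'.toSet := by
    rcases toSet_subset_or_subset hx hx' with h | h
    · exact (hS.2.2 S' h hS'.1 hS'.2.1).symm
    · exact hS'.2.2 S h hS.1 hS.2.1
  rcases eq_or_ne d 0 with rfl | hd
  · -- in dimension zero every cube is the whole (one-point) space, so no average can grow
    have hPS : P.toSet = S.toSet :=
      (Set.Nonempty.eq_univ ⟨_, P.corner_mem_toSet⟩).trans
        (Set.Nonempty.eq_univ ⟨_, S.corner_mem_toSet⟩).symm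
    have hlt := four_mul_wAvg_lt_of_mem_stoppingChildren hS
    rw [wAvg, wAvg, hPS] at hlt
    exact absurd hlt (not_lt.2 (le_mul_of_one_le_left zero_le (by norm_num)))
  · exact toSet_injective hd hset

lemma toSet_subset_of_mem_stoppingGen {j : ℕ} (hS : S ∈ stoppingGen w Q₀ j) :
    S.toSet ⊆ Q₀.toSet := by
  induction j generalizing S with
  | zero => rw [mem_singleton_iff.mp hS]
  | succ j ih =>
    obtain ⟨P, hP, hSP⟩ := mem_stoppingGen_succ.mp hS
    exact hSP.1.trans (ih hP)

lemma eq_of_mem_stoppingGen_of_mem_toSet {j : ℕ} (hS : S ∈ stoppingGen w Q₀ j)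
    (hS' : S' ∈ stoppingGen w Q₀ j) (hx : x ∈ S.toSet) (hx' : x ∈ S'.toSet) : S = S' := by
  induction j generalizing S S' with
  | zero => rw [mem_singleton_iff.mp hS, mem_singleton_iff.mp hS']
  | succ j ih =>
    obtain ⟨P, hP, hSP⟩ := mem_stoppingGen_succ.mp hS
    obtain ⟨P', hP', hSP'⟩ := mem_stoppingGen_succ.mp hS'
    obtain rfl : P = P' := ih hP hP' (hSP.1 hx) (hSP'.1 hx')
    exact eq_of_mem_stoppingChildren_of_mem_toSet hSP hSP' hx hx'

lemma four_pow_mul_wAvg_le_of_mem_stoppingGen {j n : ℕ} (hS : S ∈ stoppingGen w Q₀ j)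
    (hS' : S' ∈ stoppingGen w Q₀ (j + n)) (hx : x ∈ S.toSet) (hx' : x ∈ S'.toSet) :
    4 ^ n * S.wAvg w ≤ S'.wAvg w := by
  induction n generalizing S' with
  | zero => rw [eq_of_mem_stoppingGen_of_mem_toSet hS hS' hx hx', pow_zero, one_mul]
  | succ n ih =>
    obtain ⟨P, hP, hS'P⟩ := mem_stoppingGen_succ.mp hS'
    calc 4 ^ (n + 1) * S.wAvg w = 4 * (4 ^ n * S.wAvg w) := by ring
      _ ≤ 4 * P.wAvg w := by gcongr; exact ih hP (hS'P.1 hx')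
      _ ≤ S'.wAvg w := (four_mul_wAvg_lt_of_mem_stoppingChildren hS'P).le

lemma sum_wAvg_le_maxFn_of_mem_toSet (F : Finset (stoppingCubes w Q₀))
    (hx : ∀ S ∈ F, x ∈ S.1.toSet) :
    ∑ S ∈ F, S.1.wAvg w ≤ 2 * 2 ^ d * maxFn (Q₀.toSet.indicator w) x := by
  rcases F.eq_empty_or_nonempty with rfl | hF
  · simp
  choose n hn using fun S : stoppingCubes w Q₀ => mem_iUnion.mp S.2
  obtain ⟨S₀, hS₀, hmax⟩ := F.exists_max_image n hF
  have hinj : InjOn n F := fun S hS S' hS' h =>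
    Subtype.ext (eq_of_mem_stoppingGen_of_mem_toSet (hn S) (h ▸ hn S') (hx S hS) (hx S' hS'))
  have hdecay : ∀ S ∈ F, 2 ^ (n S₀ - n S) * S.1.wAvg w ≤ S₀.1.wAvg w := fun S hS =>
    calc 2 ^ (n S₀ - n S) * S.1.wAvg w ≤ 4 ^ (n S₀ - n S) * S.1.wAvg w := by
          gcongr; norm_num
      _ ≤ S₀.1.wAvg w := four_pow_mul_wAvg_le_of_mem_stoppingGen (hn S)
          (by rw [Nat.add_sub_cancel' (hmax S hS)]; exact hn S₀) (hx S hS) (hx S₀ hS₀)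
  calc ∑ S ∈ F, S.1.wAvg w ≤ 2 * S₀.1.wAvg w :=
        ENNReal.sum_le_two_mul_of_two_pow_mul_le hinj hmax hdecay
    _ ≤ 2 * (2 ^ d * maxFn (Q₀.toSet.indicator w) x) := by
        gcongr
        exact wAvg_le_maxFn w (toSet_subset_of_mem_stoppingGen (hn S₀)) (hx S₀ hS₀)
    _ = 2 * 2 ^ d * maxFn (Q₀.toSet.indicator w) x := (mul_assoc _ _ _).symm

end Stopping

/-- Pointwise bound: `Σ_{S ∈ 𝓢(Q₀)} (w(S)/|S|) 1_S(x) ≤ C_d M(w 1_{Q₀})(x)` for a.e. `x ∈ Q₀`. -/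
theorem stmt7 (d : ℕ) :
    ∃ C : ℝ, 0 < C ∧
      ∀ (w : (Fin d → ℝ) → ℝ), LocallyIntegrable w volume → (∀ x, 0 ≤ w x) →
        ∀ Q₀ : DyadicCube d, 0 < wMeas w Q₀.toSet → wMeas w Q₀.toSet < ∞ →
          ∀ᵐ x : Fin d → ℝ, x ∈ Q₀.toSet →
            (∑' S : stoppingCubes w Q₀,
                (wMeas w (S : DyadicCube d).toSet / volume (S : DyadicCube d).toSet) *
                  (S : DyadicCube d).toSet.indicator (fun _ => (1 : ℝ≥0∞)) x)
              ≤ ENNReal.ofReal C * maxFn (Q₀.toSet.indicator w) x := by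
  classical
  refine ⟨2 * 2 ^ d, by positivity, fun w _ _ Q₀ _ _ => ae_of_all _ fun x _ => ?_⟩
  rw [ENNReal.tsum_eq_iSup_sum]
  refine iSup_le fun F => ?_
  calc _ = ∑ S ∈ F with x ∈ S.1.toSet, S.1.wAvg w := by
        simp [Finset.sum_filter, indicator_apply, DyadicCube.wAvg]
    _ ≤ 2 * 2 ^ d * maxFn (Q₀.toSet.indicator w) x :=
        sum_wAvg_le_maxFn_of_mem_toSet _ fun S hS => (Finset.mem_filter.mp hS).2
    _ = _ := by norm_num
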